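/- Let Γ be a finite connected graph embedded in the sphere S² consisting (after suppressing 2-valent vertices) of exactly three 3-valent vertices, three 1-valent vertices, and 6 edges, such that S² \ Γ has exactly two faces. Then the pair of face degrees (counting edge-incidences, with an edge counted twice if the same face lies on both sides) belongs to {(1,11),(4,8),(5,7),(3,9),(2,10)}; in particular it is never (6,6). -/

import Mathlib

def permOrbit {α : Type*} (f : Equiv.Perm α) (x : α) : Set α :=
  {y | ∃ n : ℤ, (f ^ n) x = y}

/-!
Darts: `σ` turns around vertices, `α` swaps the two darts of an edge, faces are the cycles of
`φ = σ * α`. Suppose both faces have six darts and let `X` be one of them. Since `φ (α d) = σ d`,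
a dart of `X` whose `σ`-successor leaves `X` is exactly one whose `α`-partner leaves `X`; the other
darts of `X` are paired off by `α`, so the number of such exits is even. A trivalent vertex holds at
most one exit and there are three of them, so some vertex has none: its three darts lie in one face.
That face also contains their three `α`-partners, which are new darts because a loop at a trivalent
vertex would bound a face with a single dart. These six darts fill the face, which is therefore
closed under `α` and `φ`, hence under `σ`; by connectedness it would contain all twelve darts.
-/

open Equiv Equiv.Perm Function Finset

variable {D : Type*} {σ α : Perm D}

theorem apply_apply_apply_of_pow_three_eq_one (h3 : σ ^ 3 = 1) (a : D) : σ (σ (σ a)) = a := by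
  simpa [pow_succ] using DFunLike.congr_fun h3 a

theorem Equiv.Perm.SameCycle.eq_or_eq_apply_or_eq_apply_apply [Finite D] (h3 : σ ^ 3 = 1)
    {a b : D} (h : σ.SameCycle a b) : b = a ∨ b = σ a ∨ b = σ (σ a) := by
  obtain ⟨n, rfl⟩ := h.exists_nat_pow_eq
  have hn : σ ^ n = σ ^ (n % 3) := by
    conv_lhs => rw [← Nat.mod_add_div n 3, pow_add, pow_mul, h3, one_pow, mul_one]
  have : n % 3 < 3 := Nat.mod_lt _ (by norm_num)
  rw [hn]
  interval_cases n % 3 <;> simp [pow_succ]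

theorem even_ncard_of_involutive [Finite D] (hα : Involutive α) (hfree : ∀ d, α d ≠ d)
    {S : Set D} (hS : ∀ d ∈ S, α d ∈ S) : Even S.ncard := by
  classical
  have := Fintype.ofFinite D
  let β : Perm S := α.subtypePerm fun d => ⟨fun h => by simpa [hα d] using hS _ h, hS d⟩
  have hβ : β ^ 2 = 1 := by ext d; simp [β, sq, -subtypePerm_mul, hα _]
  have hsupp : β.support = univ := by ext d; simp [β, Subtype.ext_iff, hfree]
  have := two_dvd_card_support hβ
  rw [hsupp, card_univ, ← Nat.card_eq_fintype_card, Nat.card_coe_set_eq] at this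
  exact even_iff_two_dvd.2 this

theorem apply_mem_iff_of_mem_closure {s : Set (Perm D)} {Z : Set D}
    (hs : ∀ g ∈ s, ∀ d, g d ∈ Z ↔ d ∈ Z) {g : Perm D} (hg : g ∈ Subgroup.closure s) :
    ∀ d, g d ∈ Z ↔ d ∈ Z := by
  induction hg using Subgroup.closure_induction with
  | mem g hg => exact hs g hg
  | one => simp
  | mul g h _ _ hg hh => intro d; rw [mul_apply, hg, hh]
  | inv g _ hg => intro d; simpa using (hg (g⁻¹ d)).symm

def Equiv.Perm.exits (σ : Perm D) (Z : Set D) : Set D := {d | d ∈ Z ∧ σ d ∉ Z}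

theorem apply_mem_iff_apply_mem_of_mul_invariant (hα : Involutive α) {Z : Set D}
    (hZ : ∀ d, (σ * α) d ∈ Z ↔ d ∈ Z) (d : D) : σ d ∈ Z ↔ α d ∈ Z := by
  rw [← hZ (α d), mul_apply, hα d]

theorem even_ncard_exits [Finite D] (hα : Involutive α) (hfree : ∀ d, α d ≠ d) {Z : Set D}
    (hZ : ∀ d, (σ * α) d ∈ Z ↔ d ∈ Z) (hZe : Even Z.ncard) : Even (σ.exits Z).ncard := by
  set B := {d | d ∈ Z ∧ α d ∈ Z}
  have hB : B ⊆ Z := fun d h => h.1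
  have hexits : σ.exits Z = Z \ B := by
    ext d; simp [exits, B, apply_mem_iff_apply_mem_of_mul_invariant hα hZ]
  have hBe : Even B.ncard :=
    even_ncard_of_involutive hα hfree fun d hd => ⟨hd.2, by rw [hα d]; exact hd.1⟩
  rw [hexits, Set.ncard_sdiff hB, Nat.even_sub (Set.ncard_le_ncard hB)]
  exact iff_of_true hZe hBe

theorem apply_ne_self_of_mem_exits {Z : Set D} {d : D} (hd : d ∈ σ.exits Z) : σ d ≠ d :=
  fun h => hd.2 (by rw [h]; exact hd.1)

theorem injOn_cycleOf_exits [Fintype D] [DecidableEq D] (h3 : σ ^ 3 = 1) (Z : Set D) :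
    Set.InjOn σ.cycleOf (σ.exits Z) := by
  intro a ha b hb hab
  have hsame : σ.SameCycle a b := (sameCycle_iff_cycleOf_eq_of_mem_support
    (mem_support.2 (apply_ne_self_of_mem_exits ha))
    (mem_support.2 (apply_ne_self_of_mem_exits hb))).2 hab
  rcases hsame.eq_or_eq_apply_or_eq_apply_apply h3 with h | h | h
  · exact h.symm
  · exact absurd (h ▸ hb.1) ha.2
  · have : σ b = a := by rw [h, apply_apply_apply_of_pow_three_eq_one h3]
    exact absurd (this ▸ ha.1) hb.2

theorem exists_forall_sameCycle_notMem_exits [Fintype D] [DecidableEq D] (h3 : σ ^ 3 = 1)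
    (hodd : Odd #σ.cycleFactorsFinset) {Z : Set D} (heven : Even (σ.exits Z).ncard) :
    ∃ w ∈ σ.support, ∀ d, σ.SameCycle w d → d ∉ σ.exits Z := by
  classical
  set E := (σ.exits Z).toFinset
  have hsub : E.image σ.cycleOf ⊆ σ.cycleFactorsFinset := by
    simp only [image_subset_iff, cycleOf_mem_cycleFactorsFinset_iff, Perm.mem_support]
    exact fun d hd => apply_ne_self_of_mem_exits (Set.mem_toFinset.1 hd)
  have hlt : #(E.image σ.cycleOf) < #σ.cycleFactorsFinset := by
    have hE : Even #E := by rwa [Set.ncard_eq_toFinset_card'] at heven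
    refine (card_le_card hsub).lt_of_ne fun h => ?_
    rw [← card_image_of_injOn (by simpa [E] using injOn_cycleOf_exits h3 Z), h] at hE
    exact Nat.not_even_iff_odd.2 hodd hE
  obtain ⟨c, hc, hcE⟩ := exists_mem_notMem_of_card_lt_card hlt
  obtain ⟨w, hw⟩ := (mem_cycleFactorsFinset_iff.1 hc).1.nonempty_support
  refine ⟨w, mem_cycleFactorsFinset_support_le hc hw,
    fun d hd hdE => hcE (mem_image.2 ⟨d, ?_, ?_⟩)⟩
  · simpa [E] using hdE
  · rw [cycle_is_cycleOf hw hc, hd.cycleOf_eq]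

theorem mem_iff_of_forall_sameCycle_notMem_exits [Finite D] {Z : Set D} {w d : D}
    (hw : ∀ d, σ.SameCycle w d → d ∉ σ.exits Z) (hd : σ.SameCycle w d) : d ∈ Z ↔ w ∈ Z := by
  have hpow : ∀ a, σ.SameCycle w a → a ∈ Z → ∀ n : ℕ, (σ ^ n) a ∈ Z := by
    intro a ha haZ n
    induction n with
    | zero => simpa
    | succ n ih =>
      rw [pow_succ', mul_apply]
      by_contra h
      exact hw _ (ha.trans (sameCycle_pow_right.2 (SameCycle.refl _ _))) ⟨ih, h⟩
  constructor
  · obtain ⟨m, rfl⟩ := hd.symm.exists_nat_pow_eq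
    exact fun h => hpow _ hd h m
  · obtain ⟨n, rfl⟩ := hd.exists_nat_pow_eq
    exact fun h => hpow w (SameCycle.refl _ _) h n

theorem not_sameCycle_apply_of_mul_ne [Finite D] (h3 : σ ^ 3 = 1) (hα : Involutive α)
    (hfree : ∀ d, α d ≠ d) (hφ : ∀ d, (σ * α) d ≠ d) (d : D) : ¬σ.SameCycle d (α d) := by
  intro h
  rcases h.eq_or_eq_apply_or_eq_apply_apply h3 with h | h | h
  · exact hfree d h
  · apply hφ (σ d)
    rw [mul_apply, ← h, hα d, h]
  · apply hφ d
    rw [mul_apply, h, apply_apply_apply_of_pow_three_eq_one h3]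

theorem eq_univ_of_forall_sameCycle_mem [Fintype D] [DecidableEq D] (h3 : σ ^ 3 = 1)
    (hα : Involutive α) (hfree : ∀ d, α d ≠ d) (hφ : ∀ d, (σ * α) d ≠ d)
    (htrans : ∀ x y, ∃ g ∈ Subgroup.closure {σ, α}, g x = y) {Z : Set D}
    (hZ : ∀ d, (σ * α) d ∈ Z ↔ d ∈ Z) {w : D} (hw : w ∈ σ.support)
    (hwZ : ∀ d, σ.SameCycle w d → d ∈ Z) (hcard : Z.ncard ≤ 2 * #(σ.cycleOf w).support) :
    Z = Set.univ := by
  set W := (σ.cycleOf w).support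
  have hW : ∀ d, d ∈ W ↔ σ.SameCycle w d :=
    fun _ => mem_support_cycleOf_iff.trans (and_iff_left hw)
  have hσα := apply_mem_iff_apply_mem_of_mul_invariant hα hZ
  have hdisj : Disjoint W (W.image α) := by
    refine disjoint_left.2 fun d hd hd' => ?_
    obtain ⟨e, he, rfl⟩ := mem_image.1 hd'
    exact not_sameCycle_apply_of_mul_ne h3 hα hfree hφ e (((hW e).1 he).symm.trans ((hW _).1 hd))
  have hsub : ↑(W ∪ W.image α) ⊆ Z := by
    intro d hd
    rcases mem_union.1 hd with hd | hd
    · exact hwZ d ((hW d).1 hd)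
    · obtain ⟨e, he, rfl⟩ := mem_image.1 hd
      exact (hσα e).1 (hwZ _ (sameCycle_apply_right.2 ((hW e).1 he)))
  have hZW : ↑(W ∪ W.image α) = Z := Set.eq_of_subset_of_ncard_le hsub (by
    rw [Set.ncard_coe_finset, card_union_of_disjoint hdisj, card_image_of_injective _ α.injective]
    omega)
  have hαZ : ∀ d, α d ∈ Z ↔ d ∈ Z := by
    have hmaps : ∀ d ∈ Z, α d ∈ Z := by
      rw [← hZW]
      intro d hd
      simp only [coe_union, coe_image, Set.mem_union, Set.mem_image, mem_coe] at hd ⊢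
      rcases hd with hd | ⟨e, he, rfl⟩
      · exact Or.inr ⟨d, hd, rfl⟩
      · exact Or.inl (by rwa [hα e])
    exact fun d => ⟨fun h => hα d ▸ hmaps _ h, hmaps d⟩
  have hσZ : ∀ d, σ d ∈ Z ↔ d ∈ Z := fun d => (hσα d).trans (hαZ d)
  refine Set.eq_univ_of_forall fun d => ?_
  obtain ⟨g, hg, rfl⟩ := htrans w d
  refine (apply_mem_iff_of_mem_closure ?_ hg w).2 (hwZ w (SameCycle.refl _ _))
  rintro g (rfl | rfl)
  exacts [hσZ, hαZ]

theorem mul_apply_ne_self_of_one_lt_ncard_permOrbit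
    (hφ : ∀ z, 1 < (permOrbit (σ * α) z).ncard) (d : D) : (σ * α) d ≠ d := by
  intro h
  have hsub : permOrbit (σ * α) d ⊆ {d} := by
    rintro _ ⟨n, rfl⟩
    exact zpow_apply_eq_self_of_apply_eq_self h n
  exact (Set.ncard_le_ncard hsub).not_gt (by simpa using hφ d)

theorem permOrbit_eq_of_mem {f : Perm D} {x z : D} (h : z ∈ permOrbit f x) :
    permOrbit f z = permOrbit f x :=
  Set.ext fun _ => ⟨SameCycle.trans h, SameCycle.trans (SameCycle.symm h)⟩

theorem not_forall_ncard_permOrbit_mul_eq_six [Fintype D] [DecidableEq D]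
    (hD : Fintype.card D = 12) (hσ : σ.cycleType = {3, 3, 3})
    (hα : Involutive α) (hfree : ∀ d, α d ≠ d)
    (htrans : ∀ x y, ∃ g ∈ Subgroup.closure {σ, α}, g x = y) :
    ¬∀ z, (permOrbit (σ * α) z).ncard = 6 := by
  intro hsix
  have h3 : σ ^ 3 = 1 := by
    rw [← pow_orderOf_eq_one σ, ← lcm_cycleType, hσ]; rfl
  have hodd : Odd #σ.cycleFactorsFinset := by
    have : Multiset.card σ.cycleType = 3 := by rw [hσ]; rfl
    rw [cycleType_def, Multiset.card_map] at this
    rw [card_def, this]; decide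
  have hφ := mul_apply_ne_self_of_one_lt_ncard_permOrbit (fun z => by rw [hsix]; norm_num)
  obtain ⟨z⟩ : Nonempty D := Fintype.card_pos_iff.1 (by omega)
  set X := permOrbit (σ * α) z
  have hX : ∀ d, (σ * α) d ∈ X ↔ d ∈ X := fun _ => sameCycle_apply_right
  obtain ⟨w, hw, hwX⟩ := exists_forall_sameCycle_notMem_exits h3 hodd
    (even_ncard_exits hα hfree hX (by rw [hsix]; decide))
  have hW : #(σ.cycleOf w).support = 3 := by
    have : #(σ.cycleOf w).support ∈ σ.cycleType :=
      Multiset.mem_map_of_mem _ (cycleOf_mem_cycleFactorsFinset_iff.2 hw)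
    simpa [hσ] using this
  obtain ⟨Z, hZ, hZ6, hwZ⟩ : ∃ Z : Set D, (∀ d, (σ * α) d ∈ Z ↔ d ∈ Z) ∧ Z.ncard = 6 ∧
      ∀ d, σ.SameCycle w d → d ∈ Z := by
    by_cases hwX' : w ∈ X
    · exact ⟨X, hX, hsix z, fun d hd => (mem_iff_of_forall_sameCycle_notMem_exits hwX hd).2 hwX'⟩
    · refine ⟨Xᶜ, fun d => not_congr (hX d), ?_, fun d hd =>
        mt (mem_iff_of_forall_sameCycle_notMem_exits hwX hd).1 hwX'⟩
      rw [Set.ncard_compl, hsix, Nat.card_eq_fintype_card, hD]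
  have := eq_univ_of_forall_sameCycle_mem h3 hα hfree hφ htrans hZ hw hwZ (by omega)
  rw [this, Set.ncard_univ, Nat.card_eq_fintype_card, hD] at hZ6
  omega

theorem stmt17_general (σ α : Equiv.Perm (Fin 12)) (s : ℕ)
    (hσ : σ.cycleType = {3, 3, 3})
    (hα : α * α = 1 ∧ ∀ x, α x ≠ x)
    (htrans : ∀ x y : Fin 12,
      ∃ g ∈ Subgroup.closure ({σ, α} : Set (Equiv.Perm (Fin 12))), g x = y)
    (x y : Fin 12)
    (hx : (permOrbit (σ * α) x).ncard = s) (hy : (permOrbit (σ * α) y).ncard = 12 - s)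
    (hcov : ∀ z, z ∈ permOrbit (σ * α) x ∨ z ∈ permOrbit (σ * α) y) :
    ({s, 12 - s} : Finset ℕ) ∈
      ({{1, 11}, {4, 8}, {5, 7}, {3, 9}, {2, 10}} : Finset (Finset ℕ)) ∧ s ≠ 6 := by
  have hinv : Involutive α := fun d => by simpa using DFunLike.congr_fun hα.1 d
  have hs6 : s ≠ 6 := by
    rintro rfl
    refine not_forall_ncard_permOrbit_mul_eq_six (by simp) hσ hinv hα.2 htrans fun z => ?_
    rcases hcov z with h | h
    · rwa [permOrbit_eq_of_mem h]
    · rwa [permOrbit_eq_of_mem h]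
  have hxpos : 0 < s := hx ▸ (Set.ncard_pos (Set.toFinite _)).2 ⟨x, SameCycle.refl _ _⟩
  have hypos : 0 < 12 - s := hy ▸ (Set.ncard_pos (Set.toFinite _)).2 ⟨y, SameCycle.refl _ _⟩
  have hs12 : s < 12 := by omega
  refine ⟨?_, hs6⟩
  interval_cases s <;> first | decide | exact absurd rfl hs6

/-- Combinatorial core of the exceptionality of
`(S², S², 12, 3; ⟦2,2,2,2,2,2⟧, ⟦1,1,1,3,3,3⟧, ⟦6,6⟧)`, phrased via the permutation
model of maps on the sphere: a connected graph with three 3-valent and three 1-valent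
vertices and 6 edges (so 12 darts, vertex permutation `σ` of cycle type `{3,3,3}`,
edge involution `α` fixed-point free) having exactly two faces has face-degree pair
in `{(1,11),(4,8),(5,7),(3,9),(2,10)}`; in particular never `(6,6)`. -/
theorem stmt17 (σ α : Equiv.Perm (Fin 12)) (s : ℕ)
    (hσ : σ.cycleType = {3, 3, 3})
    (hα : α * α = 1 ∧ ∀ x, α x ≠ x)
    (htrans : ∀ x y : Fin 12,
      ∃ g ∈ Subgroup.closure ({σ, α} : Set (Equiv.Perm (Fin 12))), g x = y)
    (x y : Fin 12) (hxy : permOrbit (σ * α) x ≠ permOrbit (σ * α) y)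
    (hx : (permOrbit (σ * α) x).ncard = s) (hy : (permOrbit (σ * α) y).ncard = 12 - s)
    (hcov : ∀ z, z ∈ permOrbit (σ * α) x ∨ z ∈ permOrbit (σ * α) y) :
    ({s, 12 - s} : Finset ℕ) ∈
      ({{1, 11}, {4, 8}, {5, 7}, {3, 9}, {2, 10}} : Finset (Finset ℕ)) ∧ s ≠ 6 :=
  stmt17_general σ α s hσ hα htrans x y hx hy hcov
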